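/- arXiv:1205.0130 — 2 statements merged into one kernel-verified Lean document; each statement's English description precedes it below -/
import Mathlib

section
/- Let G be a bipartite graph with parts X of size m and Y of size n, every vertex of X of degree l and every vertex of Y of degree k (m ≥ n, ml = nk). Then w_X(G) ≤ l · ⌈m/l⌉, i.e., there exists a proper edge (l·⌈m/l⌉)-coloring of G interval on X. -/
/-- A proper edge `t`-coloring of the bipartite graph with parts `α`, `β` and
edge set `E ⊆ α × β`: colors lie in `{1,…,t}`, all colors are used, and
adjacent edges (sharing an endpoint) get distinct colors. -/
def IsProperEdgeColoring {α β : Type*} (E : Finset (α × β)) (t : ℕ)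
    (φ : α × β → ℕ) : Prop :=
  (∀ e ∈ E, φ e ∈ Finset.Icc 1 t) ∧
  (∀ c ∈ Finset.Icc 1 t, ∃ e ∈ E, φ e = c) ∧
  (∀ e ∈ E, ∀ e' ∈ E, e ≠ e' → (e.1 = e'.1 ∨ e.2 = e'.2) → φ e ≠ φ e')

/-- The spectrum of a vertex `x` of the part `α`: the set of colors on edges
incident with `x`. -/
def spectX {α β : Type*} [DecidableEq α] (E : Finset (α × β))
    (φ : α × β → ℕ) (x : α) : Finset ℕ :=
  (E.filter fun e => e.1 = x).image φ

/-- The spectrum of a vertex `y` of the part `β`. -/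
def spectY {α β : Type*} [DecidableEq β] (E : Finset (α × β))
    (φ : α × β → ℕ) (y : β) : Finset ℕ :=
  (E.filter fun e => e.2 = y).image φ

/-- Degree of a vertex of the part `α`. -/
def degX {α β : Type*} [DecidableEq α] (E : Finset (α × β)) (x : α) : ℕ :=
  (E.filter fun e => e.1 = x).card

/-- Degree of a vertex of the part `β`. -/
def degY {α β : Type*} [DecidableEq β] (E : Finset (α × β)) (y : β) : ℕ :=
  (E.filter fun e => e.2 = y).card

/-- A finite set of naturals is an interval: nonempty and consisting of
consecutive integers. -/
def IsIntervalFinset (S : Finset ℕ) : Prop :=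
  S.Nonempty ∧ ∀ a ∈ S, ∀ b ∈ S, ∀ c, a ≤ c → c ≤ b → c ∈ S

/-- The coloring is interval in every vertex of the part `α` (every vertex
with at least one incident edge has an interval spectrum). -/
def IntervalOnX {α β : Type*} [DecidableEq α] (E : Finset (α × β))
    (φ : α × β → ℕ) : Prop :=
  ∀ x : α, (spectX E φ x).Nonempty → IsIntervalFinset (spectX E φ x)

/-- The coloring is interval in every vertex of the part `β`. -/
def IntervalOnY {α β : Type*} [DecidableEq β] (E : Finset (α × β))
    (φ : α × β → ℕ) : Prop :=
  ∀ y : β, (spectY E φ y).Nonempty → IsIntervalFinset (spectY E φ y)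

/-- Maximum degree of the bipartite graph. -/
def maxDeg {α β : Type*} [Fintype α] [Fintype β] [DecidableEq α] [DecidableEq β]
    (E : Finset (α × β)) : ℕ :=
  max (Finset.univ.sup (degX E)) (Finset.univ.sup (degY E))

/-!
Number the vertices of `X` and cut them into `⌈m/l⌉` consecutive groups of at most `l` vertices.
The edges at the `j`-th group form a bipartite graph of maximum degree `l` (a vertex of `Y` has
at most `l` neighbours in the group), so by König's theorem they can be properly coloured with
the `l` colours `l * j + 1, …, l * j + l`. Every vertex of `X` has degree `l`, hence sees all `l`
colours of its block, which is an interval; distinct groups use disjoint blocks.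
-/

open Finset
open scoped Matrix

theorem Nat.eq_and_eq_of_mul_add_eq_mul_add {l a a' r r' : ℕ} (hr : r < l) (hr' : r' < l)
    (h : l * a + r = l * a' + r') : a = a' ∧ r = r' := by
  have hl : 0 < l := by omega
  obtain ⟨h1, h2⟩ := (Nat.div_mod_unique (a := l * a + r) (d := a) (c := r) hl).2 ⟨by ring, hr⟩
  obtain ⟨h1', h2'⟩ := (Nat.div_mod_unique (a := l * a + r) (d := a') (c := r') hl).2
    ⟨by rw [h]; ring, hr'⟩
  exact ⟨h1.symm.trans h1', h2.symm.trans h2'⟩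

namespace Matrix

variable {ι : Type*} [Fintype ι] [DecidableEq ι]

theorem exists_perm_forall_pos_of_sum_eq {l : ℕ} (hl : 0 < l) (M : Matrix ι ι ℕ)
    (hrow : ∀ i, ∑ j, M i j = l) (hcol : ∀ j, ∑ i, M i j = l) :
    ∃ σ : Equiv.Perm ι, ∀ i, 0 < M i (σ i) := by
  let support (i : ι) : Finset ι := {j | 0 < M i j}
  have hall (A : Finset ι) : #A ≤ #(A.biUnion support) := by
    have hsupp (i : ι) : ∑ j ∈ support i, M i j = l := by
      rw [← hrow i]
      exact sum_subset (filter_subset _ _) fun j _ hj => by simpa [support] using hj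
    refine le_of_mul_le_mul_right ?_ hl
    calc #A * l = ∑ i ∈ A, ∑ j ∈ support i, M i j := by simp [hsupp]
      _ ≤ ∑ i ∈ A, ∑ j ∈ A.biUnion support, M i j :=
        sum_le_sum fun i hi => sum_le_sum_of_subset (subset_biUnion_of_mem support hi)
      _ = ∑ j ∈ A.biUnion support, ∑ i ∈ A, M i j := sum_comm
      _ ≤ ∑ j ∈ A.biUnion support, ∑ i, M i j :=
        sum_le_sum fun j _ => sum_le_sum_of_subset (subset_univ A)
      _ = #(A.biUnion support) * l := by simp [hcol]
  obtain ⟨f, hf, hfsupp⟩ := (all_card_le_biUnion_card_iff_exists_injective support).1 hall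
  exact ⟨Equiv.ofBijective f (Finite.injective_iff_bijective.1 hf), fun i => by
    simpa [support] using hfsupp i⟩

theorem exists_eq_sum_permMatrix_of_sum_eq (l : ℕ) (M : Matrix ι ι ℕ)
    (hrow : ∀ i, ∑ j, M i j = l) (hcol : ∀ j, ∑ i, M i j = l) :
    ∃ σ : Fin l → Equiv.Perm ι, M = ∑ k, (σ k).permMatrix ℕ := by
  induction l generalizing M with
  | zero =>
    refine ⟨Fin.elim0, ?_⟩
    ext i j
    simpa using (sum_eq_zero_iff.1 (hrow i)) j (mem_univ j)
  | succ l ih =>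
    obtain ⟨π, hπ⟩ := exists_perm_forall_pos_of_sum_eq l.succ_pos M hrow hcol
    have hsplit : M = (M - π.permMatrix ℕ) + π.permMatrix ℕ := by
      ext i j
      by_cases h : π i = j
      · subst h
        simp only [add_apply, sub_apply, PEquiv.toMatrix_apply, Equiv.toPEquiv_apply,
          Option.mem_def, ↓reduceIte]
        exact (Nat.sub_add_cancel (hπ i)).symm
      · simp [Equiv.toPEquiv_apply, h]
    have hπds : π.permMatrix ℕ ∈ doublyStochastic ℕ ι := permMatrix_mem_doublyStochastic
    obtain ⟨σ, hσ⟩ := ih (M - π.permMatrix ℕ)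
      (fun i => by
        have := congrArg (fun A : Matrix ι ι ℕ => ∑ j, A i j) hsplit
        simp only [add_apply, sum_add_distrib, hrow, sum_row_of_mem_doublyStochastic hπds] at this
        omega)
      (fun j => by
        have := congrArg (fun A : Matrix ι ι ℕ => ∑ i, A i j) hsplit
        simp only [add_apply, sum_add_distrib, hcol, sum_col_of_mem_doublyStochastic hπds] at this
        omega)
    refine ⟨Fin.cons π σ, ?_⟩
    rw [Fin.sum_univ_succ, Fin.cons_zero]
    simp only [Fin.cons_succ, ← hσ]
    exact hsplit.trans (add_comm _ _)

end Matrix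

section Bipartite

variable {α β : Type*}

theorem card_filter_mem_eq_degX [DecidableEq α] [DecidableEq β] [Fintype β] (E : Finset (α × β)) (x : α) :
    #{y | (x, y) ∈ E} = degX E x := by
  refine card_nbij' (fun y => (x, y)) Prod.snd ?_ ?_ ?_ ?_ <;> intro <;> aesop

theorem card_filter_mem_eq_degY [DecidableEq α] [DecidableEq β] [Fintype α] (E : Finset (α × β)) (y : β) :
    #{x | (x, y) ∈ E} = degY E y := by
  refine card_nbij' (fun x => (x, y)) Prod.fst ?_ ?_ ?_ ?_ <;> intro <;> aesop

theorem mem_spectX [DecidableEq α] {E : Finset (α × β)} {φ : α × β → ℕ} {x : α} {v : ℕ} :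
    v ∈ spectX E φ x ↔ ∃ e ∈ E, e.1 = x ∧ φ e = v := by
  simp only [spectX, mem_image, mem_filter, and_assoc]

theorem degY_filter_le_card [DecidableEq β] [Fintype α] (E : Finset (α × β)) (p : α → Prop)
    [DecidablePred p] (y : β) : degY {e ∈ E | p e.1} y ≤ #{x | p x} := by
  refine card_le_card_of_injOn Prod.fst (fun e he => ?_) (fun e he e' he' h => ?_)
  · simp only [mem_coe, mem_filter, mem_univ, true_and] at he ⊢
    exact he.1.2
  · rw [mem_coe, mem_filter] at he he'
    exact Prod.ext h (he.2.trans he'.2.symm)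

/-- König's theorem: pad the biadjacency matrix to a square matrix on `α ⊕ β` with all line sums
`l` and decompose it into `l` permutations, each of which is a matching. -/
theorem exists_proper_coloring_of_deg_le [DecidableEq α] [DecidableEq β] [Fintype α] [Fintype β]
    (E : Finset (α × β)) {l : ℕ} (hX : ∀ x, degX E x ≤ l) (hY : ∀ y, degY E y ≤ l) :
    ∃ c : α × β → ℕ, (∀ e ∈ E, c e < l) ∧
      ∀ e ∈ E, ∀ e' ∈ E, e ≠ e' → (e.1 = e'.1 ∨ e.2 = e'.2) → c e ≠ c e' := by
  let B : Matrix α β ℕ := .of fun x y => if (x, y) ∈ E then 1 else 0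
  let M := Matrix.fromBlocks (.diagonal fun x => l - degX E x) B Bᵀ
    (.diagonal fun y => l - degY E y)
  have hrow : ∀ i, ∑ j, M i j = l := by
    rintro (x | y)
    · have : ∑ j, M (.inl x) j = (l - degX E x) + degX E x := by
        simp [M, B, Fintype.sum_sum_type, Matrix.diagonal_apply, card_filter_mem_eq_degX]
      exact this.trans (Nat.sub_add_cancel (hX x))
    · have : ∑ j, M (.inr y) j = degY E y + (l - degY E y) := by
        simp [M, B, Fintype.sum_sum_type, Matrix.diagonal_apply, card_filter_mem_eq_degY]
      exact this.trans (Nat.add_sub_cancel' (hY y))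
  have hcol : ∀ j, ∑ i, M i j = l := by
    have hsymm : Mᵀ = M := by simp [M, Matrix.fromBlocks_transpose]
    intro j
    have := hrow j
    rwa [← hsymm] at this
  obtain ⟨σ, hσ⟩ := Matrix.exists_eq_sum_permMatrix_of_sum_eq l M hrow hcol
  have hcover : ∀ e ∈ E, ∃ k, σ k (.inl e.1) = .inr e.2 := by
    intro e he
    have : M (.inl e.1) (.inr e.2) = 1 := by simp [M, B, he]
    rw [hσ] at this
    by_contra! h
    simp [Matrix.sum_apply, Equiv.toPEquiv_apply, h] at this
  choose k hk using hcover
  refine ⟨fun e => if he : e ∈ E then k e he else 0, fun e he => by simp [he], ?_⟩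
  intro e he e' he' hne hadj hce
  simp only [he, he', dite_true, Fin.val_inj] at hce
  have h := hk e he
  have h' := hk e' he'
  rw [hce] at h
  rcases hadj with h1 | h2
  · rw [h1, h'] at h
    exact hne (Prod.ext h1 (Sum.inr_injective h).symm)
  · rw [h2, ← h'] at h
    exact hne (Prod.ext (Sum.inl_injective ((σ _).injective h)) h2)

theorem image_filter_fst_eq_range [DecidableEq α] (E : Finset (α × β)) {l : ℕ} {c : α × β → ℕ}
    (hlt : ∀ e ∈ E, c e < l)
    (hproper : ∀ e ∈ E, ∀ e' ∈ E, e ≠ e' → (e.1 = e'.1 ∨ e.2 = e'.2) → c e ≠ c e')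
    {x : α} (hx : degX E x = l) :
    {e ∈ E | e.1 = x}.image c = range l := by
  have hinj : Set.InjOn c ({e ∈ E | e.1 = x} : Finset (α × β)) := by
    intro e he e' he' hce
    rw [mem_coe, mem_filter] at he he'
    by_contra hne
    exact hproper e he.1 e' he'.1 hne (.inl (he.2.trans he'.2.symm)) hce
  refine eq_of_subset_of_card_le (fun r hr => ?_) ?_
  · obtain ⟨e, he, rfl⟩ := mem_image.1 hr
    exact mem_range.2 (hlt e (mem_filter.1 he).1)
  · rw [card_range, card_image_of_injOn hinj, ← hx, degX]

theorem exists_coloring_spectX_eq_Icc [DecidableEq α] [DecidableEq β] [Fintype α] [Fintype β]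
    (E : Finset (α × β)) {l : ℕ} (g : α → ℕ) (hg : ∀ j, #{x | g x = j} ≤ l)
    (hX : ∀ x, degX E x = l) :
    ∃ φ : α × β → ℕ,
      (∀ e ∈ E, ∀ e' ∈ E, e ≠ e' → (e.1 = e'.1 ∨ e.2 = e'.2) → φ e ≠ φ e') ∧
      ∀ x, spectX E φ x = Icc (l * g x + 1) (l * g x + l) := by
  have hblock (j : ℕ) := exists_proper_coloring_of_deg_le {e ∈ E | g e.1 = j} (l := l)
    (fun x => by
      rw [← hX x, degX, degX, filter_filter]
      exact card_le_card (monotone_filter_right _ fun _ _ h => h.2))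
    (fun y => (degY_filter_le_card E _ y).trans (hg j))
  choose c hclt hcproper using hblock
  have hfilter (x : α) : {e ∈ {e ∈ E | g e.1 = g x} | e.1 = x} = {e ∈ E | e.1 = x} := by
    rw [filter_filter]
    exact filter_congr fun e _ => ⟨And.right, fun h => ⟨h ▸ rfl, h⟩⟩
  refine ⟨fun e => l * g e.1 + c (g e.1) e + 1, ?_, fun x => ?_⟩
  · intro e he e' he' hne hadj hφ
    have hlt := hclt (g e.1) e (mem_filter.2 ⟨he, rfl⟩)
    have hlt' := hclt (g e'.1) e' (mem_filter.2 ⟨he', rfl⟩)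
    obtain ⟨hgg, hcc⟩ := Nat.eq_and_eq_of_mul_add_eq_mul_add hlt hlt' (Nat.add_right_cancel hφ)
    rw [hgg] at hcc
    exact hcproper (g e'.1) e (mem_filter.2 ⟨he, hgg⟩) e' (mem_filter.2 ⟨he', rfl⟩) hne hadj hcc
  · have himage := image_filter_fst_eq_range _ (hclt (g x)) (hcproper (g x))
      (x := x) (by rw [degX, hfilter, ← degX, hX])
    rw [hfilter] at himage
    have hspect : spectX E (fun e => l * g e.1 + c (g e.1) e + 1) x =
        ({e ∈ E | e.1 = x}.image (c (g x))).image (fun r => l * g x + r + 1) := by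
      rw [spectX, image_image]
      exact image_congr fun e he => by rw [(mem_filter.1 he).2]; rfl
    rw [hspect, himage]
    ext v
    simp only [mem_image, mem_range, mem_Icc]
    constructor
    · rintro ⟨r, hr, rfl⟩
      omega
    · rintro ⟨h1, h2⟩
      exact ⟨v - (l * g x + 1), by omega, by omega⟩

theorem isProperEdgeColoring_of_spectX_eq_Icc [DecidableEq α] {E : Finset (α × β)}
    {φ : α × β → ℕ} {l p : ℕ} {g : α → ℕ}
    (hproper : ∀ e ∈ E, ∀ e' ∈ E, e ≠ e' → (e.1 = e'.1 ∨ e.2 = e'.2) → φ e ≠ φ e')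
    (hspect : ∀ x, spectX E φ x = Icc (l * g x + 1) (l * g x + l))
    (hg : Set.range g = Set.Iio p) : IsProperEdgeColoring E (l * p) φ := by
  refine ⟨fun e he => ?_, fun c hc => ?_, hproper⟩
  · have hmem : φ e ∈ spectX E φ e.1 := mem_spectX.2 ⟨e, he, rfl, rfl⟩
    have hgp : g e.1 < p := by simpa [hg] using Set.mem_range_self (f := g) e.1
    have : l * (g e.1 + 1) ≤ l * p := Nat.mul_le_mul_left l hgp
    rw [hspect, mem_Icc] at hmem
    rw [Nat.mul_succ] at this
    exact mem_Icc.2 ⟨by omega, by omega⟩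
  · rw [mem_Icc] at hc
    have hl : 0 < l := Nat.pos_of_mul_pos_right (a := l) (b := p) (by omega)
    have hj : (c - 1) / l < p := (Nat.div_lt_iff_lt_mul hl).2 (by rw [mul_comm]; omega)
    obtain ⟨x, hx⟩ : (c - 1) / l ∈ Set.range g := by rwa [hg]
    have hmem : c ∈ spectX E φ x := by
      have := Nat.div_add_mod (c - 1) l
      have := Nat.mod_lt (c - 1) hl
      rw [hspect, hx, mem_Icc]
      omega
    obtain ⟨e, he, -, hφe⟩ := mem_spectX.1 hmem
    exact ⟨e, he, hφe⟩

end Bipartite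

theorem card_filter_div_eq_le {α : Type*} [Fintype α] {f : α → ℕ} (hf : Function.Injective f)
    {l : ℕ} (hl : 0 < l) (j : ℕ) : #{x | f x / l = j} ≤ l := by
  refine (card_le_card_of_injOn (f · % l) (fun x _ => ?_) fun x hx x' hx' hmod => ?_).trans_eq
    (card_range l)
  · simpa using Nat.mod_lt _ hl
  · simp only [coe_filter, mem_univ, true_and, Set.mem_ofPred_eq] at hx hx'
    apply hf
    rw [← Nat.div_add_mod (f x) l, ← Nat.div_add_mod (f x') l, hx, hx']
    exact congrArg _ hmod

theorem exists_card_fibre_le_range_eq_Iio (α : Type*) [Fintype α] {l : ℕ} (hl : 0 < l) :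
    ∃ g : α → ℕ, (∀ j, #{x | g x = j} ≤ l) ∧
      Set.range g = Set.Iio ((Fintype.card α + l - 1) / l) := by
  let enum := Fintype.equivFin α
  have hlt (j : ℕ) : j < (Fintype.card α + l - 1) / l ↔ l * j < Fintype.card α := by
    rw [Nat.lt_iff_add_one_le, Nat.le_div_iff_mul_le hl, add_mul, one_mul, mul_comm]
    omega
  refine ⟨fun x => enum x / l, card_filter_div_eq_le (Fin.val_injective.comp enum.injective) hl,
    Set.ext fun j => ?_⟩
  rw [Set.mem_Iio, hlt]
  constructor
  · rintro ⟨x, rfl⟩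
    exact (Nat.mul_div_le _ l).trans_lt (enum x).isLt
  · intro hj
    exact ⟨enum.symm ⟨l * j, hj⟩, by simp [Nat.mul_div_cancel_left j hl]⟩

theorem isIntervalFinset_Icc {a b : ℕ} (h : a ≤ b) : IsIntervalFinset (Icc a b) :=
  ⟨nonempty_Icc.2 h, fun _ ha _ hb _ hac hcb =>
    mem_Icc.2 ⟨(mem_Icc.1 ha).1.trans hac, hcb.trans (mem_Icc.1 hb).2⟩⟩

theorem stmt9_general {α β : Type*} [Fintype α] [Fintype β] [DecidableEq α] [DecidableEq β]
    (E : Finset (α × β)) (m l : ℕ)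
    (hl : 0 < l)
    (hcardX : Fintype.card α = m)
    (hdX : ∀ x : α, degX E x = l) :
    ∃ φ : α × β → ℕ, IsProperEdgeColoring E (l * ((m + l - 1) / l)) φ ∧
      IntervalOnX E φ := by
  subst hcardX
  obtain ⟨g, hgcard, hgrange⟩ := exists_card_fibre_le_range_eq_Iio α hl
  obtain ⟨φ, hproper, hspect⟩ := exists_coloring_spectX_eq_Icc E g hgcard hdX
  refine ⟨φ, isProperEdgeColoring_of_spectX_eq_Icc hproper hspect hgrange, fun x _ => ?_⟩
  rw [hspect]
  exact isIntervalFinset_Icc (by omega)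

/-- For an `(l,k)`-biregular bipartite graph (`|X| = m`,
`|Y| = n`, `m ≥ n`, `ml = nk`), `w_X(G) ≤ l·⌈m/l⌉`: there exists a proper
edge `(l·⌈m/l⌉)`-coloring interval on `X`. -/
theorem stmt9 {α β : Type*} [Fintype α] [Fintype β] [DecidableEq α] [DecidableEq β]
    (E : Finset (α × β)) (m n l k : ℕ)
    (hm : 0 < m) (hn : 0 < n) (hl : 0 < l) (hk : 0 < k)
    (hcardX : Fintype.card α = m) (hcardY : Fintype.card β = n)
    (hdX : ∀ x : α, degX E x = l) (hdY : ∀ y : β, degY E y = k)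
    (hnm : n ≤ m) (hml : m * l = n * k) :
    ∃ φ : α × β → ℕ, IsProperEdgeColoring E (l * ((m + l - 1) / l)) φ ∧
      IntervalOnX E φ :=
  stmt9_general E m l hl hcardX hdX
end

section
/- Let R be the set of all vertices of one part of the complete bipartite graph K_{m,n} (m, n ≥ 1). Then w_R(K_{m,n}) = (m + n − |R|) · ⌈|R| / (m + n − |R|)⌉. -/
section Aux
open Finset

lemma mod_inj_aux {n x y y' : ℕ} (hy : y < n) (hy' : y' < n)
    (h : (x + y) % n = (x + y') % n) : y = y' :=
  (Nat.ModEq.add_left_cancel' x h).eq_of_lt_of_lt hy hy'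

lemma mod_inj_aux2 {n x x' y : ℕ} (h : (x + y) % n = (x' + y) % n) :
    x % n = x' % n := Nat.ModEq.add_right_cancel' y h

lemma exists_mod {n : ℕ} (hn : 0 < n) (x r : ℕ) (hr : r < n) :
    ∃ y < n, (x + y) % n = r := by
  refine ⟨(n - x % n + r) % n, Nat.mod_lt _ hn, ?_⟩
  have hx : x % n < n := Nat.mod_lt x hn
  have key : x % n + (n - x % n + r) = n + r := by omega
  calc (x + (n - x % n + r) % n) % n
      = (x + (n - x % n + r)) % n := Nat.add_mod_mod ..
    _ = (x % n + (n - x % n + r)) % n := (Nat.mod_add_mod ..).symm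
    _ = (n + r) % n := by rw [key]
    _ = r := by rw [Nat.add_comm, Nat.add_mod_right, Nat.mod_eq_of_lt hr]

lemma divmod_unique {n a b r1 r2 : ℕ} (hn : 0 < n) (h1 : r1 < n) (h2 : r2 < n)
    (h : n * a + r1 = n * b + r2) : a = b ∧ r1 = r2 := by
  have ha : (n * a + r1) / n = a := by
    rw [Nat.mul_add_div hn, Nat.div_eq_of_lt h1]; omega
  have hb : (n * b + r2) / n = b := by
    rw [Nat.mul_add_div hn, Nat.div_eq_of_lt h2]; omega
  have hab : a = b := by rw [← ha, ← hb, h]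
  exact ⟨hab, by subst hab; omega⟩

lemma icc_interval {a b : ℕ} (h : a ≤ b) : IsIntervalFinset (Finset.Icc a b) := by
  refine ⟨Finset.nonempty_Icc.2 h, ?_⟩
  intro p hp q hq c h1 h2
  simp only [Finset.mem_Icc] at *
  omega

lemma interval_eq_Icc {S : Finset ℕ} (h : IsIntervalFinset S) :
    S = Finset.Icc (S.min' h.1) (S.max' h.1) := by
  apply Finset.ext
  intro c
  simp only [Finset.mem_Icc]
  constructor
  · intro hc; exact ⟨S.min'_le c hc, S.le_max' c hc⟩
  · rintro ⟨h1, h2⟩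
    exact h.2 _ (S.min'_mem h.1) _ (S.max'_mem h.1) c h1 h2

lemma spectX_univ {m n : ℕ} (φ : Fin m × Fin n → ℕ) (x : Fin m) :
    spectX (univ : Finset (Fin m × Fin n)) φ x
      = (univ : Finset (Fin n)).image (fun y => φ (x, y)) := by
  ext c
  simp only [spectX, Finset.mem_image, Finset.mem_filter, Finset.mem_univ, true_and]
  constructor
  · rintro ⟨e, he, rfl⟩
    exact ⟨e.2, by rw [← he]⟩
  · rintro ⟨y, rfl⟩
    exact ⟨(x, y), rfl, rfl⟩

lemma ceil_div (m n : ℕ) (hm : 1 ≤ m) (hn : 1 ≤ n) :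
    (m + n - 1) / n = (m - 1) / n + 1 := by
  have : m + n - 1 = (m - 1) + n := by omega
  rw [this, Nat.add_div_right _ hn]

lemma ub (m n : ℕ) (hm : 1 ≤ m) (hn : 1 ≤ n) :
    ∃ φ : Fin m × Fin n → ℕ,
      IsProperEdgeColoring (univ : Finset (Fin m × Fin n)) (n * ((m + n - 1) / n)) φ ∧
      IntervalOnX (univ : Finset (Fin m × Fin n)) φ := by
  have hn0 : 0 < n := hn
  set B := (m - 1) / n with hB
  set φ : Fin m × Fin n → ℕ :=
    fun e => n * ((e.1 : ℕ) / n) + ((e.1 : ℕ) + (e.2 : ℕ)) % n + 1 with hφ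
  have ht : n * ((m + n - 1) / n) = n * B + n := by
    rw [ceil_div m n hm hn, Nat.mul_add, Nat.mul_one]
  have hBm : n * B ≤ m - 1 := by
    rw [hB, Nat.mul_comm]; exact Nat.div_mul_le_self _ _
  -- spectrum computation
  have hspec : ∀ x : Fin m, spectX (univ : Finset (Fin m × Fin n)) φ x
      = Finset.Icc (n * ((x : ℕ) / n) + 1) (n * ((x : ℕ) / n) + n) := by
    intro x
    rw [spectX_univ]
    ext c
    simp only [Finset.mem_image, Finset.mem_univ, true_and, Finset.mem_Icc]
    constructor
    · rintro ⟨y, rfl⟩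
      have : ((x : ℕ) + (y : ℕ)) % n < n := Nat.mod_lt _ hn0
      simp only [hφ]
      omega
    · rintro ⟨h1, h2⟩
      obtain ⟨y, hy, hmod⟩ := exists_mod hn0 (x : ℕ) (c - 1 - n * ((x : ℕ) / n))
        (by omega)
      refine ⟨⟨y, hy⟩, ?_⟩
      simp only [hφ, hmod]
      omega
  have hdle : ∀ x : Fin m, n * ((x : ℕ) / n) ≤ n * B :=
    fun x => Nat.mul_le_mul_left n (Nat.div_le_div_right (by omega))
  refine ⟨φ, ⟨?_, ?_, ?_⟩, ?_⟩
  · -- colors in range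
    rintro ⟨x, y⟩ -
    simp only [Finset.mem_Icc, hφ, ht]
    have h1 : ((x : ℕ) + (y : ℕ)) % n < n := Nat.mod_lt _ hn0
    have h2 := hdle x
    omega
  · -- surjective
    intro c hc
    rw [Finset.mem_Icc, ht] at hc
    have e1 : n * ((c - 1) / n) + (c - 1) % n = c - 1 := Nat.div_add_mod _ _
    have hrn : (c - 1) % n < n := Nat.mod_lt _ hn0
    have hqlt : (c - 1) / n < B + 1 := by
      refine Nat.lt_of_mul_lt_mul_left (a := n) ?_
      have : n * (B + 1) = n * B + n := by ring
      omega
    have hxm : n * ((c - 1) / n) < m := by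
      have h3 : n * ((c - 1) / n) ≤ n * B := Nat.mul_le_mul_left n (by omega)
      omega
    refine ⟨(⟨n * ((c - 1) / n), hxm⟩, ⟨(c - 1) % n, hrn⟩), Finset.mem_univ _, ?_⟩
    simp only [hφ]
    rw [Nat.mul_div_cancel_left _ hn0, Nat.mul_add_mod, Nat.mod_eq_of_lt hrn]
    omega
  · -- proper
    rintro ⟨x, y⟩ - ⟨x', y'⟩ - hne hshare heq
    simp only [hφ] at heq
    have h1 : ((x : ℕ) + (y : ℕ)) % n < n := Nat.mod_lt _ hn0
    have h2 : ((x' : ℕ) + (y' : ℕ)) % n < n := Nat.mod_lt _ hn0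
    obtain ⟨hdiv, hmod⟩ := divmod_unique (a := (x : ℕ) / n) (b := (x' : ℕ) / n)
      hn0 h1 h2 (by omega)
    rcases hshare with hx | hy
    · simp only at hx
      have hxx : (x : ℕ) = (x' : ℕ) := congrArg Fin.val hx
      have : y = y' := Fin.ext (mod_inj_aux (x := (x' : ℕ)) y.isLt y'.isLt (by rw [hxx] at hmod; exact hmod))
      exact hne (by rw [hx, this])
    · simp only at hy
      have hyy : (y : ℕ) = (y' : ℕ) := congrArg Fin.val hy
      have hmm : (x : ℕ) % n = (x' : ℕ) % n := by
        refine mod_inj_aux2 (y := (y : ℕ)) ?_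
        rw [hmod, hyy]
      have hxx : x = x' := Fin.ext (by
        have e1 := Nat.div_add_mod (x : ℕ) n
        have e2 := Nat.div_add_mod (x' : ℕ) n
        omega)
      exact hne (by rw [hxx, hy])
  · -- interval on X
    intro x _
    rw [hspec x]
    exact icc_interval (by omega)

lemma lb (m n : ℕ) (hm : 1 ≤ m) (hn : 1 ≤ n) (t : ℕ)
    (φ : Fin m × Fin n → ℕ)
    (hp : IsProperEdgeColoring (univ : Finset (Fin m × Fin n)) t φ)
    (hi : IntervalOnX (univ : Finset (Fin m × Fin n)) φ) :
    n * ((m + n - 1) / n) ≤ t := by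
  classical
  have hn0 : 0 < n := hn
  have hnemp : Nonempty (Fin n) := ⟨⟨0, hn0⟩⟩
  have hinj : ∀ x : Fin m, Function.Injective (fun y : Fin n => φ (x, y)) := by
    intro x y y' h
    by_contra hne
    exact hp.2.2 (x, y) (Finset.mem_univ _) (x, y') (Finset.mem_univ _)
      (by simp [hne]) (Or.inl rfl) h
  have hcard : ∀ x : Fin m, (spectX (univ : Finset (Fin m × Fin n)) φ x).card = n := by
    intro x
    rw [spectX_univ, Finset.card_image_of_injective _ (hinj x), Finset.card_univ,
      Fintype.card_fin]
  have hne : ∀ x, (spectX (univ : Finset (Fin m × Fin n)) φ x).Nonempty := fun x =>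
    Finset.card_pos.1 (by rw [hcard x]; exact hn0)
  have hsub : ∀ x, spectX (univ : Finset (Fin m × Fin n)) φ x ⊆ Finset.Icc 1 t := by
    intro x c hc
    rw [spectX_univ] at hc
    obtain ⟨y, -, rfl⟩ := Finset.mem_image.1 hc
    exact hp.1 (x, y) (Finset.mem_univ _)
  have key : ∀ x : Fin m, ∃ sx, 1 ≤ sx ∧ sx + n - 1 ≤ t ∧
      spectX (univ : Finset (Fin m × Fin n)) φ x = Finset.Icc sx (sx + n - 1) := by
    intro x
    have hiv : IsIntervalFinset (spectX (univ : Finset (Fin m × Fin n)) φ x) :=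
      hi x (hne x)
    have h1 := interval_eq_Icc hiv
    set a := (spectX (univ : Finset (Fin m × Fin n)) φ x).min' hiv.1 with ha
    set b := (spectX (univ : Finset (Fin m × Fin n)) φ x).max' hiv.1 with hb
    have hab : a ≤ b := Finset.min'_le _ _ (Finset.max'_mem _ hiv.1)
    have h2 : (spectX (univ : Finset (Fin m × Fin n)) φ x).card = b + 1 - a := by
      rw [h1, Nat.card_Icc]
    have hamem := hsub x (Finset.min'_mem _ hiv.1)
    have hbmem := hsub x (Finset.max'_mem _ hiv.1)
    rw [Finset.mem_Icc] at hamem hbmem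
    rw [hcard x] at h2
    refine ⟨a, by omega, by omega, ?_⟩
    have : b = a + n - 1 := by omega
    rw [h1, this]
  choose s hsge hsle hIcc using key
  -- multiplicity of a color is at most n
  have hmult : ∀ c : ℕ,
      ((univ : Finset (Fin m)).filter
        (fun x => c ∈ spectX (univ : Finset (Fin m × Fin n)) φ x)).card ≤ n := by
    intro c
    have key2 : ∀ x ∈ (univ : Finset (Fin m)).filter
        (fun x => c ∈ spectX (univ : Finset (Fin m × Fin n)) φ x),
        ∃ y : Fin n, φ (x, y) = c := by
      intro x hx
      rw [Finset.mem_filter, spectX_univ] at hx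
      obtain ⟨y, -, hy⟩ := Finset.mem_image.1 hx.2
      exact ⟨y, hy⟩
    choose! f hf using key2
    have hinjOn : Set.InjOn f ((univ : Finset (Fin m)).filter
        (fun x => c ∈ spectX (univ : Finset (Fin m × Fin n)) φ x)) := by
      intro x hx x' hx' hff
      by_contra hxx
      refine hp.2.2 (x, f x) (Finset.mem_univ _) (x', f x') (Finset.mem_univ _)
        (by simp [hxx]) (Or.inr hff) ?_
      rw [hf x hx, hf x' hx']
    calc ((univ : Finset (Fin m)).filter _).card ≤ (univ : Finset (Fin n)).card :=
          Finset.card_le_card_of_injOn f (fun a _ => Finset.mem_univ _) hinjOn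
      _ = n := by rw [Finset.card_univ, Fintype.card_fin]
  -- counting
  have hcover : ∀ x : Fin m,
      n * ((s x + n - 1) / n) ∈ spectX (univ : Finset (Fin m × Fin n)) φ x := by
    intro x
    rw [hIcc x, Finset.mem_Icc]
    have e1 : n * ((s x + n - 1) / n) + (s x + n - 1) % n = s x + n - 1 :=
      Nat.div_add_mod _ _
    have e2 : (s x + n - 1) % n < n := Nat.mod_lt _ hn0
    omega
  have hfiber : ∀ a ∈ (univ : Finset (Fin m)).image (fun x => (s x + n - 1) / n),
      ((univ : Finset (Fin m)).filter (fun x => (s x + n - 1) / n = a)).card ≤ n := by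
    intro a _
    refine le_trans (Finset.card_le_card ?_) (hmult (n * a))
    intro x hx
    rw [Finset.mem_filter] at *
    refine ⟨hx.1, ?_⟩
    have h := hcover x
    rwa [hx.2] at h
  have himg : (univ : Finset (Fin m)).image (fun x => (s x + n - 1) / n)
      ⊆ Finset.Icc 1 (t / n) := by
    intro a ha
    obtain ⟨x, -, rfl⟩ := Finset.mem_image.1 ha
    rw [Finset.mem_Icc]
    constructor
    · rw [Nat.le_div_iff_mul_le hn0, one_mul]
      have := hsge x
      omega
    · rw [Nat.le_div_iff_mul_le hn0]
      have e1 : n * ((s x + n - 1) / n) + (s x + n - 1) % n = s x + n - 1 :=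
        Nat.div_add_mod _ _
      have e3 : (s x + n - 1) / n * n = n * ((s x + n - 1) / n) := Nat.mul_comm _ _
      have := hsle x
      omega
  have hcount : m ≤ n * (t / n) := by
    have h1 := Finset.card_le_mul_card_image (univ : Finset (Fin m))
      (f := fun x => (s x + n - 1) / n) n hfiber
    have h3 := Finset.card_le_card himg
    rw [Nat.card_Icc] at h3
    have h5 : t / n + 1 - 1 = t / n := Nat.succ_sub_one _
    rw [h5] at h3
    calc m = (univ : Finset (Fin m)).card := by
          rw [Finset.card_univ, Fintype.card_fin]
      _ ≤ n * ((univ : Finset (Fin m)).image (fun x => (s x + n - 1) / n)).card := h1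
      _ ≤ n * (t / n) := Nat.mul_le_mul_left n h3
  have h6 : (m + n - 1) / n ≤ t / n := by
    have h7 : (m + n - 1) / n < t / n + 1 := by
      rw [Nat.div_lt_iff_lt_mul hn0]
      have h8 : (t / n + 1) * n = n * (t / n) + n := by
        rw [Nat.add_mul, one_mul, Nat.mul_comm]
      omega
    omega
  calc n * ((m + n - 1) / n) ≤ n * (t / n) := Nat.mul_le_mul_left n h6
    _ ≤ t := by rw [Nat.mul_comm]; exact Nat.div_mul_le_self _ _

lemma proper_swap {m n t : ℕ} (φ : Fin m × Fin n → ℕ)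
    (h : IsProperEdgeColoring (univ : Finset (Fin m × Fin n)) t φ) :
    IsProperEdgeColoring (univ : Finset (Fin n × Fin m)) t (φ ∘ Prod.swap) := by
  obtain ⟨h1, h2, h3⟩ := h
  refine ⟨fun e _ => h1 e.swap (Finset.mem_univ _), fun c hc => ?_, ?_⟩
  · obtain ⟨e, -, he⟩ := h2 c hc
    exact ⟨e.swap, Finset.mem_univ _, by simpa using he⟩
  · rintro e - e' - hne hsh
    refine h3 e.swap (Finset.mem_univ _) e'.swap (Finset.mem_univ _) (fun h => hne ?_) ?_
    · simpa using congrArg Prod.swap h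
    · rcases hsh with h | h
      exacts [Or.inr h, Or.inl h]

lemma spectY_swap {m n : ℕ} (φ : Fin m × Fin n → ℕ) (y : Fin n) :
    spectY (univ : Finset (Fin m × Fin n)) φ y
      = spectX (univ : Finset (Fin n × Fin m)) (φ ∘ Prod.swap) y := by
  ext c
  simp only [spectY, spectX, Finset.mem_image, Finset.mem_filter, Finset.mem_univ,
    true_and, Function.comp]
  constructor
  · rintro ⟨e, he, rfl⟩
    exact ⟨e.swap, he, by simp⟩
  · rintro ⟨e, he, rfl⟩
    exact ⟨e.swap, he, rfl⟩

lemma intervalY_iff {m n : ℕ} (φ : Fin m × Fin n → ℕ) :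
    IntervalOnY (univ : Finset (Fin m × Fin n)) φ ↔
    IntervalOnX (univ : Finset (Fin n × Fin m)) (φ ∘ Prod.swap) := by
  constructor
  · intro h y hy
    rw [← spectY_swap] at hy ⊢
    exact h y hy
  · intro h y hy
    rw [spectY_swap] at hy ⊢
    exact h y hy

end Aux

/-- For `R` the set of all vertices of one part of `K_{m,n}`
(`m, n ≥ 1`), `w_R(K_{m,n}) = (m + n - |R|)·⌈|R| / (m + n - |R|)⌉`. For the
part `X` of size `m` this value is `n·⌈m/n⌉`, and for the part `Y` of size
`n` it is `m·⌈n/m⌉`; both cases are asserted. -/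
theorem stmt13 (m n : ℕ) (hm : 1 ≤ m) (hn : 1 ≤ n) :
    ((∃ φ : Fin m × Fin n → ℕ,
        IsProperEdgeColoring (Finset.univ : Finset (Fin m × Fin n)) (n * ((m + n - 1) / n)) φ ∧
        IntervalOnX (Finset.univ : Finset (Fin m × Fin n)) φ) ∧
      (∀ t : ℕ, (∃ φ : Fin m × Fin n → ℕ,
        IsProperEdgeColoring (Finset.univ : Finset (Fin m × Fin n)) t φ ∧
        IntervalOnX (Finset.univ : Finset (Fin m × Fin n)) φ) → n * ((m + n - 1) / n) ≤ t)) ∧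
    ((∃ φ : Fin m × Fin n → ℕ,
        IsProperEdgeColoring (Finset.univ : Finset (Fin m × Fin n)) (m * ((n + m - 1) / m)) φ ∧
        IntervalOnY (Finset.univ : Finset (Fin m × Fin n)) φ) ∧
      (∀ t : ℕ, (∃ φ : Fin m × Fin n → ℕ,
        IsProperEdgeColoring (Finset.univ : Finset (Fin m × Fin n)) t φ ∧
        IntervalOnY (Finset.univ : Finset (Fin m × Fin n)) φ) → m * ((n + m - 1) / m) ≤ t)) := by
  refine ⟨⟨ub m n hm hn, fun t ht => ?_⟩, ⟨?_, fun t ht => ?_⟩⟩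
  · obtain ⟨φ, h1, h2⟩ := ht
    exact lb m n hm hn t φ h1 h2
  · obtain ⟨ψ, hp, hix⟩ := ub n m hn hm
    refine ⟨ψ ∘ Prod.swap, proper_swap ψ hp, ?_⟩
    rw [intervalY_iff]
    have : (ψ ∘ Prod.swap) ∘ Prod.swap = ψ := by
      funext e; simp
    rw [this]
    exact hix
  · obtain ⟨φ, h1, h2⟩ := ht
    exact lb n m hn hm t (φ ∘ Prod.swap) (proper_swap φ h1) ((intervalY_iff φ).1 h2)
end
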